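/- The Riordan array (1/(1-4x^2), x/√(1-4x^2)) is a quasi-involution: its inverse equals (1/(1+4x^2), x/√(1+4x^2)). -/

import Mathlib

/-! Let `s² = 1 - a x²` and `g = x / s`. Then `1 + a g² = (s² + a x²) / s² = s⁻²`, so if
`t² = 1 + a x²` then `t ∘ g` is a square root of `s⁻²` with constant term `1`, that is,
`t ∘ g = s⁻¹`. Hence `(x / t) ∘ g = g s = x` and `(1 - a x²)⁻¹ · (1 + a x²)⁻¹ ∘ g = s⁻² s² = 1`.
The two products of the theorem are the cases `a = 4` and `a = -4` (with `s`, `t` exchanged). -/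

open PowerSeries

/-- Composition f ∘ g of formal power series (intended for g with zero constant term). -/
noncomputable def comp (f g : ℚ⟦X⟧) : ℚ⟦X⟧ :=
  PowerSeries.mk fun n => ∑ k ∈ Finset.range (n + 1),
    PowerSeries.coeff k f * PowerSeries.coeff n (g ^ k)

/-- (f(x) - f(0))/x. -/
noncomputable def shift (f : ℚ⟦X⟧) : ℚ⟦X⟧ := PowerSeries.mk fun n => PowerSeries.coeff (n + 1) f

/-- Action of the almost Riordan array (a; g, f) on a power series b. -/
noncomputable def aact (a g f b : ℚ⟦X⟧) : ℚ⟦X⟧ :=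
  PowerSeries.C (PowerSeries.constantCoeff b) * a + PowerSeries.X * g * comp (shift b) f

/-- Product in the group of almost Riordan arrays of order 1 (triples (a; g, f)). -/
noncomputable def amul (M N : ℚ⟦X⟧ × ℚ⟦X⟧ × ℚ⟦X⟧) : ℚ⟦X⟧ × ℚ⟦X⟧ × ℚ⟦X⟧ :=
  (aact M.1 M.2.1 M.2.2 N.1, M.2.1 * comp N.2.1 M.2.2, comp N.2.2 M.2.2)

/-- Product in the Riordan group (pairs (g, f)). -/
noncomputable def rmul (M N : ℚ⟦X⟧ × ℚ⟦X⟧) : ℚ⟦X⟧ × ℚ⟦X⟧ :=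
  (M.1 * comp N.1 M.2, comp N.2 M.2)

theorem comp_eq_subst {g : ℚ⟦X⟧} (hg : constantCoeff g = 0) (f : ℚ⟦X⟧) :
    comp f g = f.subst g := by
  ext n
  rw [comp, coeff_mk, coeff_subst' (HasSubst.of_constantCoeff_zero' hg),
    finsum_eq_sum_of_support_subset _ (s := Finset.range (n + 1))]
  · rfl
  intro d hd
  contrapose! hd
  have hX : X ^ d ∣ g ^ d := pow_dvd_pow_of_dvd (X_dvd_iff.mpr hg) d
  rw [Finset.coe_range, Set.mem_Iio, not_lt] at hd
  simp [X_pow_dvd_iff.mp hX n (by omega)]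

namespace PowerSeries

theorem constantCoeff_subst_of_constantCoeff_eq_zero {R : Type*} [CommRing R] {g : R⟦X⟧}
    (hg : constantCoeff g = 0) (f : R⟦X⟧) : constantCoeff (f.subst g) = constantCoeff f := by
  rw [← coeff_zero_eq_constantCoeff_apply, coeff_subst' (HasSubst.of_constantCoeff_zero' hg),
    finsum_eq_single _ 0]
  · simp
  intro d hd
  simp [coeff_zero_eq_constantCoeff_apply, hg, zero_pow hd]

theorem eq_of_sq_eq_sq_of_constantCoeff_eq {R : Type*} [CommRing R] [NoZeroDivisors R]
    [CharZero R] {u v : R⟦X⟧} (h : u ^ 2 = v ^ 2) (hc : constantCoeff u = constantCoeff v)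
    (hv : constantCoeff v ≠ 0) : u = v := by
  refine (sq_eq_sq_iff_eq_or_eq_neg.mp h).resolve_right fun huv => hv ?_
  rw [huv, map_neg] at hc
  exact CharZero.neg_eq_self_iff.mp hc

variable {k : Type*} [Field k]

theorem subst_inv {g : k⟦X⟧} (hg : constantCoeff g = 0) (f : k⟦X⟧) :
    f⁻¹.subst g = (f.subst g)⁻¹ := by
  have hsubst := HasSubst.of_constantCoeff_zero' hg
  by_cases hf : constantCoeff f = 0
  · rw [inv_eq_zero.mpr hf,
      inv_eq_zero.mpr (by rwa [constantCoeff_subst_of_constantCoeff_eq_zero hg]),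
      ← coe_substAlgHom hsubst, map_zero]
  rw [eq_inv_iff_mul_eq_one (by rwa [constantCoeff_subst_of_constantCoeff_eq_zero hg]),
    ← subst_mul hsubst, PowerSeries.inv_mul_cancel f hf, ← coe_substAlgHom hsubst, map_one]

section SqrtOneAddCMulXSq

variable {a : k} {s t : k⟦X⟧}

theorem sq_mul_subst_one_add_C_mul_X_sq (hs0 : constantCoeff s = 1)
    (hs : s ^ 2 = 1 - C a * X ^ 2) : s ^ 2 * (1 + C a * X ^ 2).subst (X * s⁻¹) = 1 := by
  have hsubst : HasSubst (X * s⁻¹) := HasSubst.of_constantCoeff_zero' (by simp)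
  have hss : s * s⁻¹ = 1 := PowerSeries.mul_inv_cancel s (by simp [hs0])
  have hC : substAlgHom hsubst (C a) = C a := by rw [coe_substAlgHom, subst_C]; rfl
  rw [← coe_substAlgHom hsubst]
  simp only [map_add, map_one, map_mul, map_pow, substAlgHom_X, hC]
  linear_combination hs + C a * X ^ 2 * (s * s⁻¹ + 1) * hss

theorem subst_mul_eq_one_of_sq_eq_one_add [CharZero k] (hs0 : constantCoeff s = 1)
    (hs : s ^ 2 = 1 - C a * X ^ 2) (ht0 : constantCoeff t = 1) (ht : t ^ 2 = 1 + C a * X ^ 2) :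
    t.subst (X * s⁻¹) * s = 1 := by
  have hg : constantCoeff (X * s⁻¹) = 0 := by simp
  refine eq_of_sq_eq_sq_of_constantCoeff_eq ?_
    (by simp [constantCoeff_subst_of_constantCoeff_eq_zero hg, ht0, hs0]) (by simp)
  rw [mul_pow, ← subst_pow (HasSubst.of_constantCoeff_zero' hg), ht, mul_comm,
    sq_mul_subst_one_add_C_mul_X_sq hs0 hs, one_pow]

theorem subst_X_mul_inv_of_sq_eq_one_add [CharZero k] (hs0 : constantCoeff s = 1)
    (hs : s ^ 2 = 1 - C a * X ^ 2) (ht0 : constantCoeff t = 1) (ht : t ^ 2 = 1 + C a * X ^ 2) :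
    (X * t⁻¹).subst (X * s⁻¹) = X := by
  have hg : constantCoeff (X * s⁻¹) = 0 := by simp
  have hsubst := HasSubst.of_constantCoeff_zero' hg
  have hts : (t.subst (X * s⁻¹))⁻¹ = s :=
    (inv_eq_iff_mul_eq_one (by simp [constantCoeff_subst_of_constantCoeff_eq_zero hg, ht0])).mpr
      (by rw [mul_comm, subst_mul_eq_one_of_sq_eq_one_add hs0 hs ht0 ht])
  rw [subst_mul hsubst, subst_X hsubst, subst_inv hg, hts, mul_assoc,
    PowerSeries.inv_mul_cancel s (by simp [hs0]), mul_one]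

theorem inv_one_sub_mul_subst_inv_one_add (hs0 : constantCoeff s = 1)
    (hs : s ^ 2 = 1 - C a * X ^ 2) :
    (1 - C a * X ^ 2)⁻¹ * (1 + C a * X ^ 2)⁻¹.subst (X * s⁻¹) = 1 := by
  have hg : constantCoeff (X * s⁻¹) = 0 := by simp
  have hB : ((1 + C a * X ^ 2).subst (X * s⁻¹))⁻¹ = s ^ 2 :=
    (inv_eq_iff_mul_eq_one (by simp [constantCoeff_subst_of_constantCoeff_eq_zero hg])).mpr
      (sq_mul_subst_one_add_C_mul_X_sq hs0 hs)
  rw [subst_inv hg, hB, ← hs, PowerSeries.inv_mul_cancel _ (by simp [hs0])]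

end SqrtOneAddCMulXSq

end PowerSeries

theorem rmul_inv_one_sub_C_mul_X_sq_inv_one_add (a : ℚ) {s t : ℚ⟦X⟧}
    (hs0 : constantCoeff s = 1) (hs : s ^ 2 = 1 - C a * X ^ 2)
    (ht0 : constantCoeff t = 1) (ht : t ^ 2 = 1 + C a * X ^ 2) :
    rmul ((1 - C a * X ^ 2)⁻¹, X * s⁻¹) ((1 + C a * X ^ 2)⁻¹, X * t⁻¹) = (1, X) := by
  have hg : constantCoeff (X * s⁻¹) = 0 := by simp
  rw [rmul, comp_eq_subst hg, comp_eq_subst hg, inv_one_sub_mul_subst_inv_one_add hs0 hs,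
    subst_X_mul_inv_of_sq_eq_one_add hs0 hs ht0 ht]

/-- (1/(1-4x^2), x/√(1-4x^2)) is a quasi-involution: its inverse is
(1/(1+4x^2), x/√(1+4x^2)). -/
theorem quasi_involution_one (s t : ℚ⟦X⟧)
    (hs0 : PowerSeries.constantCoeff s = 1) (hs : s ^ 2 = 1 - 4 * X ^ 2)
    (ht0 : PowerSeries.constantCoeff t = 1) (ht : t ^ 2 = 1 + 4 * X ^ 2) :
    rmul ((1 - 4 * X ^ 2 : ℚ⟦X⟧)⁻¹, X * s⁻¹) ((1 + 4 * X ^ 2)⁻¹, X * t⁻¹) = (1, X) ∧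
    rmul ((1 + 4 * X ^ 2 : ℚ⟦X⟧)⁻¹, X * t⁻¹) ((1 - 4 * X ^ 2)⁻¹, X * s⁻¹) = (1, X) := by
  have h4 : (4 : ℚ⟦X⟧) = C 4 := (map_ofNat C 4).symm
  have h4' : (4 : ℚ⟦X⟧) = -C (-4) := by rw [map_neg, neg_neg, h4]
  constructor
  · rw [h4] at hs ht ⊢
    exact rmul_inv_one_sub_C_mul_X_sq_inv_one_add 4 hs0 hs ht0 ht
  · simp only [h4', neg_mul, sub_neg_eq_add, ← sub_eq_add_neg] at hs ht ⊢
    exact rmul_inv_one_sub_C_mul_X_sq_inv_one_add (-4) ht0 ht hs0 hs
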